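/- Let F be a field with char F = 3 and let A be the Matsuo algebra of the affine plane of order 3 over F. Let T be the F-span of the 12 line sums Σ_{u∈L} p_u (L ranging over the lines of the affine plane). Then every t ∈ T is an absolute zero divisor of A: for all x ∈ A, U_t(x) := 2·t(tx) − (tt)x = 0. -/

import Mathlib

open Finset

/-- The Matsuo algebra `M_{1/2}(P3)` of the affine plane of order 3 over `F`: the free
`F`-module on the point set `P = (ℤ/3)²`, with the commutative bilinear multiplication
determined by `p_u p_u = p_u` and `p_u p_v = (1/4)(p_u + p_v − p_{−u−v})` for `u ≠ v`. -/
noncomputable def mMul (F : Type*) [Field F] (x y : ZMod 3 × ZMod 3 → F) :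
    ZMod 3 × ZMod 3 → F :=
  ∑ u : ZMod 3 × ZMod 3, ∑ v : ZMod 3 × ZMod 3,
    (x u * y v) •
      (if u = v then Pi.single u (1 : F)
       else (4⁻¹ : F) • (Pi.single u (1 : F) + Pi.single v (1 : F) -
         Pi.single (-u - v) (1 : F)) : ZMod 3 × ZMod 3 → F)

/-- The sum `Σ_{u ∈ s} p_u` in the Matsuo algebra. -/
noncomputable def pSum (F : Type*) [Field F] (s : Finset (ZMod 3 × ZMod 3)) :
    ZMod 3 × ZMod 3 → F :=
  ∑ u ∈ s, Pi.single u 1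

/-- The line of the affine plane of order 3 through `a` with direction `w`
(a coset of the 1-dimensional subspace spanned by `w`). -/
def lineThru (a w : ZMod 3 × ZMod 3) : Finset (ZMod 3 × ZMod 3) :=
  Finset.image (fun t : ZMod 3 => a + t • w) Finset.univ

/-!
In characteristic 3 we have `1/4 = 1` and `-u - u = u`, so the Matsuo product becomes
`x y = σ(y) x + σ(x) y - ρ(x ⋆ y)`, where `σ = augment` is the coefficient sum, `⋆ = conv` the
convolution of the group algebra `F[(ℤ/3)²]` and `ρ = reflect` the reflection `u ↦ -u`.
A line sum has `σ = 3 = 0`, its reflection is again a line sum, and the convolution of two line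
sums depends only on their directions: it is `0` for parallel lines and the all-ones vector `𝟙`
otherwise. So for `t ∈ T` we get `σ t = 0` and `t ⋆ ρ t = t ⋆ t = c 𝟙`, whence
`t ⋆ (t x) = σ(x) (t ⋆ t) - (t ⋆ ρ t) ⋆ ρ x = 0` and `t (t x) = 0`. Finally `t t = -c 𝟙`, and `𝟙`
annihilates `A` because `σ(𝟙) = 9 = 0`.
-/

namespace Matsuo

lemma apply_mem_of_mem_span₂ {R M N P : Type*} [CommSemiring R] [AddCommMonoid M]
    [AddCommMonoid N] [AddCommMonoid P] [Module R M] [Module R N] [Module R P]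
    (f : M →ₗ[R] N →ₗ[R] P) {s : Set M} {t : Set N} {p : Submodule R P}
    (h : ∀ m ∈ s, ∀ n ∈ t, f m n ∈ p) {m : M} {n : N}
    (hm : m ∈ Submodule.span R s) (hn : n ∈ Submodule.span R t) : f m n ∈ p := by
  have h_map₂ := Submodule.apply_mem_map₂ f hm hn
  rw [Submodule.map₂_span_span] at h_map₂
  exact Submodule.span_le.2 (by rintro _ ⟨m, hm, n, hn, rfl⟩; exact h m hm n hn) h_map₂

section GroupAlgebra

variable {R G : Type*} [CommRing R]

section Augment

variable [Fintype G]

def augment : (G → R) →ₗ[R] R where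
  toFun x := ∑ u, x u
  map_add' _ _ := sum_add_distrib
  map_smul' _ _ := (mul_sum ..).symm

@[simp] lemma augment_apply (x : G → R) : augment x = ∑ u, x u := rfl

lemma augment_comp_ringHom {S : Type*} [CommRing S] (f : R →+* S) (x : G → R) :
    augment (f ∘ x) = f (augment x) := by
  simp [map_sum]

end Augment

section Reflect

variable [AddCommGroup G]

def reflect : (G → R) →ₗ[R] G → R := LinearMap.funLeft R R Neg.neg

@[simp] lemma reflect_apply (x : G → R) (p : G) : reflect x p = x (-p) := rfl

lemma reflect_one : reflect (1 : G → R) = 1 := rfl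

end Reflect

variable [AddCommGroup G] [Fintype G]

def conv : (G → R) →ₗ[R] (G → R) →ₗ[R] G → R :=
  LinearMap.mk₂ R (fun x y p => ∑ u, x u * y (p - u))
    (fun _ _ _ => by funext p; simp [add_mul, sum_add_distrib])
    (fun _ _ _ => by funext p; simp [mul_sum, mul_assoc])
    (fun _ _ _ => by funext p; simp [mul_add, sum_add_distrib])
    (fun _ _ _ => by funext p; simp [mul_sum, mul_left_comm])

@[simp] lemma conv_apply (x y : G → R) (p : G) : conv x y p = ∑ u, x u * y (p - u) := rfl

lemma conv_comm (x y : G → R) : conv x y = conv y x := by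
  funext p
  exact Fintype.sum_equiv (Equiv.subLeft p) _ _ fun u => by simp [mul_comm]

lemma conv_assoc (x y z : G → R) : conv (conv x y) z = conv x (conv y z) := by
  funext p
  simp only [conv_apply, sum_mul, mul_sum]
  rw [sum_comm]
  refine sum_congr rfl fun v _ => Fintype.sum_equiv (Equiv.subRight v) _ _ fun u => ?_
  simp [mul_assoc, sub_sub_sub_cancel_right]

lemma augment_conv (x y : G → R) : augment (conv x y) = augment x * augment y := by
  simp only [augment_apply, conv_apply, sum_mul]
  rw [sum_comm]
  refine sum_congr rfl fun u _ => ?_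
  rw [← mul_sum]
  exact congrArg _ (Fintype.sum_equiv (Equiv.subRight u) _ _ fun p => rfl)

lemma augment_reflect (x : G → R) : augment (reflect x) = augment x :=
  Fintype.sum_equiv (Equiv.neg G) _ _ fun _ => rfl

lemma reflect_conv (x y : G → R) : reflect (conv x y) = conv (reflect x) (reflect y) := by
  funext p
  exact Fintype.sum_equiv (Equiv.neg G) _ _ fun u => by simp [sub_eq_add_neg, add_comm]

lemma conv_smul_one_left (c : R) (x : G → R) : conv (c • 1) x = (c * augment x) • 1 := by
  funext p
  simp only [conv_apply, augment_apply, Pi.smul_apply, Pi.one_apply, smul_eq_mul, mul_one, mul_sum]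
  exact Fintype.sum_equiv (Equiv.subLeft p) _ _ fun u => by simp

lemma conv_comp_sub (x y : G → R) (a b : G) :
    conv (fun p => x (p - a)) (fun p => y (p - b)) = fun p => conv x y (p - (a + b)) := by
  funext p
  refine Fintype.sum_equiv (Equiv.subRight a) _ _ fun u => ?_
  simp only [Equiv.subRight_apply]
  congr 2
  abel

lemma conv_comp_ringHom {S : Type*} [CommRing S] (f : R →+* S) (x y : G → R) :
    conv (f ∘ x) (f ∘ y) = f ∘ conv x y := by
  funext p; simp [map_sum]

end GroupAlgebra

section Lines

/- Lines are first handled as `ZMod 3`-valued indicators, so that the finite computations on the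
plane are decidable; `pSum_lineThru` carries them over to `F`. -/
def lineIndicator (a w : ZMod 3 × ZMod 3) : ZMod 3 × ZMod 3 → ZMod 3 :=
  fun p => if ∃ t : ZMod 3, p = a + t • w then 1 else 0

lemma lineIndicator_eq_comp_sub (a w : ZMod 3 × ZMod 3) :
    lineIndicator a w = fun p => lineIndicator 0 w (p - a) := by
  funext p
  simp only [lineIndicator, zero_add, sub_eq_iff_eq_add']

lemma reflect_lineIndicator (a w : ZMod 3 × ZMod 3) :
    reflect (lineIndicator a w) = lineIndicator (-a) w := by
  funext p
  simp only [reflect_apply, lineIndicator, neg_eq_iff_eq_neg, neg_add, ← neg_smul]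
  congr 1
  exact propext ⟨fun ⟨t, ht⟩ => ⟨-t, ht⟩, fun ⟨t, ht⟩ => ⟨-t, by rw [neg_neg]; exact ht⟩⟩

lemma augment_lineIndicator :
    ∀ a w : ZMod 3 × ZMod 3, w ≠ 0 → augment (lineIndicator a w) = 0 := by
  decide

lemma conv_lineIndicator_zero : ∀ w w' : ZMod 3 × ZMod 3, w ≠ 0 → w' ≠ 0 →
    conv (lineIndicator 0 w) (lineIndicator 0 w') = if ∃ s : ZMod 3, w' = s • w then 0 else 1 := by
  decide

lemma conv_lineIndicator (a b w w' : ZMod 3 × ZMod 3) (hw : w ≠ 0) (hw' : w' ≠ 0) :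
    conv (lineIndicator a w) (lineIndicator b w') =
      if ∃ s : ZMod 3, w' = s • w then 0 else 1 := by
  rw [lineIndicator_eq_comp_sub a, lineIndicator_eq_comp_sub b, conv_comp_sub,
    conv_lineIndicator_zero w w' hw hw']
  split_ifs <;> rfl

end Lines

section LineSpan

variable (F : Type*) [Field F]

def lineSpan : Submodule F (ZMod 3 × ZMod 3 → F) :=
  Submodule.span F {x | ∃ a w : ZMod 3 × ZMod 3, w ≠ 0 ∧ x = pSum F (lineThru a w)}

variable [CharP F 3]

lemma pSum_lineThru (a w : ZMod 3 × ZMod 3) :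
    pSum F (lineThru a w) = ZMod.castHom (dvd_refl 3) F ∘ lineIndicator a w := by
  funext p
  have h_mem : p ∈ lineThru a w ↔ ∃ t : ZMod 3, p = a + t • w := by simp [lineThru, eq_comm]
  simp only [pSum, Finset.sum_apply, Pi.single_apply, sum_ite_eq, Function.comp_apply,
    lineIndicator, h_mem]
  split_ifs <;> simp

variable {F}

lemma reflect_lineSum (a w : ZMod 3 × ZMod 3) :
    reflect (pSum F (lineThru a w)) = pSum F (lineThru (-a) w) := by
  rw [pSum_lineThru, pSum_lineThru, ← reflect_lineIndicator]
  rfl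

lemma conv_lineSum (a b w w' : ZMod 3 × ZMod 3) (hw : w ≠ 0) (hw' : w' ≠ 0) :
    conv (pSum F (lineThru a w)) (pSum F (lineThru b w')) =
      if ∃ s : ZMod 3, w' = s • w then 0 else 1 := by
  rw [pSum_lineThru, pSum_lineThru, conv_comp_ringHom, conv_lineIndicator a b w w' hw hw']
  split_ifs <;> funext p <;> simp

lemma augment_eq_zero_of_mem_lineSpan {t : ZMod 3 × ZMod 3 → F} (ht : t ∈ lineSpan F) :
    augment t = 0 := by
  refine (Submodule.span_le (p := LinearMap.ker augment)).2 ?_ ht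
  rintro _ ⟨a, w, hw, rfl⟩
  rw [SetLike.mem_coe, LinearMap.mem_ker, pSum_lineThru, augment_comp_ringHom,
    augment_lineIndicator a w hw, map_zero]

lemma reflect_mem_lineSpan {t : ZMod 3 × ZMod 3 → F} (ht : t ∈ lineSpan F) :
    reflect t ∈ lineSpan F := by
  refine (Submodule.span_le (p := (lineSpan F).comap reflect)).2 ?_ ht
  rintro _ ⟨a, w, hw, rfl⟩
  rw [SetLike.mem_coe, Submodule.mem_comap, reflect_lineSum]
  exact Submodule.subset_span ⟨-a, w, hw, rfl⟩

lemma conv_mem_span_one_of_mem_lineSpan {s t : ZMod 3 × ZMod 3 → F} (hs : s ∈ lineSpan F)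
    (ht : t ∈ lineSpan F) : conv s t ∈ F ∙ 1 := by
  refine apply_mem_of_mem_span₂ conv ?_ hs ht
  rintro _ ⟨a, w, hw, rfl⟩ _ ⟨b, w', hw', rfl⟩
  rw [conv_lineSum a b w w' hw hw']
  split_ifs
  · exact zero_mem _
  · exact Submodule.mem_span_singleton_self 1

lemma conv_reflect_left_of_mem_lineSpan {s t : ZMod 3 × ZMod 3 → F} (hs : s ∈ lineSpan F)
    (ht : t ∈ lineSpan F) : conv (reflect s) t = conv s t := by
  have h := apply_mem_of_mem_span₂ (p := ⊥) (conv ∘ₗ (reflect - LinearMap.id)) ?_ hs ht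
  · simpa [sub_eq_zero] using h
  rintro _ ⟨a, w, hw, rfl⟩ _ ⟨b, w', hw', rfl⟩
  rw [Submodule.mem_bot, LinearMap.comp_apply, LinearMap.sub_apply, LinearMap.id_apply, map_sub,
    LinearMap.sub_apply, reflect_lineSum, conv_lineSum (-a) b w w' hw hw',
    conv_lineSum a b w w' hw hw', sub_self]

end LineSpan

section CharThree

variable {F : Type*} [Field F] [CharP F 3]

lemma inv_four_eq_one : (4 : F)⁻¹ = 1 := by
  have h3 : (3 : F) = 0 := CharP.cast_eq_zero F 3
  rw [show (4 : F) = 3 + 1 by norm_num, h3, zero_add, inv_one]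

lemma mMul_eq (x y : ZMod 3 × ZMod 3 → F) :
    mMul F x y = augment y • x + augment x • y - reflect (conv x y) := by
  have h_self : ∀ u : ZMod 3 × ZMod 3, -u - u = u := by decide
  have h_basis : ∀ u v : ZMod 3 × ZMod 3,
      (if u = v then Pi.single u (1 : F)
        else (4⁻¹ : F) • (Pi.single u 1 + Pi.single v 1 - Pi.single (-u - v) 1)) =
      Pi.single u 1 + Pi.single v 1 - Pi.single (-u - v) 1 := by
    intro u v
    split_ifs with h
    · subst h; rw [h_self]; abel
    · rw [inv_four_eq_one, one_smul]
  funext p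
  have h_solve : ∀ u v : ZMod 3 × ZMod 3, p = -u - v ↔ v = -p - u := fun u v => by
    constructor <;> intro h <;> subst h <;> abel
  simp only [mMul, h_basis, Finset.sum_apply, Pi.smul_apply, Pi.add_apply, Pi.sub_apply,
    smul_eq_mul, Pi.single_apply, mul_add, mul_sub, sum_add_distrib, sum_sub_distrib,
    augment_apply, reflect_apply, conv_apply, h_solve, mul_ite, mul_one, mul_zero, sum_ite_eq',
    mem_univ, if_true]
  rw [sum_comm]
  simp only [sum_ite_eq, mem_univ, if_true]
  rw [← mul_sum, ← sum_mul]
  ring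

lemma augment_mMul (x y : ZMod 3 × ZMod 3 → F) :
    augment (mMul F x y) = augment x * augment y := by
  rw [mMul_eq, map_sub, map_add, map_smul, map_smul, augment_reflect, augment_conv, smul_eq_mul,
    smul_eq_mul]
  ring

lemma augment_one : augment (1 : ZMod 3 × ZMod 3 → F) = 0 := by
  simp only [augment_apply, Pi.one_apply, sum_const, card_univ, Fintype.card_prod, ZMod.card,
    nsmul_eq_mul, mul_one]
  exact_mod_cast (CharP.cast_eq_zero_iff F 3 (3 * 3)).2 (dvd_mul_right 3 3)

lemma mMul_smul_one_left (c : F) (x : ZMod 3 × ZMod 3 → F) : mMul F (c • 1) x = 0 := by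
  rw [mMul_eq, conv_smul_one_left, map_smul, map_smul, reflect_one, augment_one, smul_zero,
    zero_smul, add_zero, smul_smul, mul_comm, sub_self]

end CharThree

end Matsuo

open Matsuo

/-- For `char F = 3`, every element `t` of the span `T` of the 12 line sums
of the Matsuo algebra of the affine plane of order 3 is an absolute zero divisor:
`U_t(x) = 2·t(tx) − (tt)x = 0` for all `x`. -/
theorem stmt_15 (F : Type*) [Field F] [CharP F 3] :
    ∀ t ∈ Submodule.span F
        {x : ZMod 3 × ZMod 3 → F | ∃ a w : ZMod 3 × ZMod 3, w ≠ 0 ∧ x = pSum F (lineThru a w)},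
      ∀ x : ZMod 3 × ZMod 3 → F,
        (2 : F) • mMul F t (mMul F t x) - mMul F (mMul F t t) x = 0 := by
  intro t ht x
  have h_aug : augment t = 0 := augment_eq_zero_of_mem_lineSpan ht
  obtain ⟨c, hc⟩ := Submodule.mem_span_singleton.1 (conv_mem_span_one_of_mem_lineSpan ht ht)
  have h_mul : ∀ z, mMul F t z = augment z • t - reflect (conv t z) := fun z => by
    rw [mMul_eq, h_aug, zero_smul, add_zero]
  have h_conv : conv t (mMul F t x) = 0 := by
    rw [h_mul, map_sub, map_smul, reflect_conv, ← conv_assoc, conv_comm t (reflect t),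
      conv_reflect_left_of_mem_lineSpan ht ht, ← hc, conv_smul_one_left, augment_reflect,
      smul_smul, mul_comm, sub_self]
  have h_cube : mMul F t (mMul F t x) = 0 := by
    rw [h_mul, augment_mMul, h_aug, zero_mul, zero_smul, h_conv, map_zero, sub_zero]
  have h_sq : mMul F t t = (-c) • 1 := by
    rw [h_mul, h_aug, zero_smul, zero_sub, ← hc, map_smul, reflect_one, neg_smul]
  rw [h_cube, h_sq, mMul_smul_one_left, smul_zero, sub_zero]
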